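/- Suppose s₁, …, s_m ∈ ℝⁿ satisfy ∑_{i=1}^m ⟨w, s_i⟩² = 2⟨w,w⟩ for all w ∈ ℝⁿ (a eutactic star of scale 2). If i ≠ j and the Gram matrix G of (s_i, s_j) satisfies that both 2I − G and A − G are positive semidefinite where A = [[2,2],[2,2]], then (2 − |s_i|²)(2 − |s_j|²) ≥ 1. -/
import Mathlib


open scoped RealInnerProductSpace Matrix

/-- If `v 1, …, v m` form a eutactic star of scale 2 in `ℝⁿ`, `i ≠ j`, and both
`2I − G` and `A − G` are positive semidefinite, where `G` is the Gram matrix of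
`(v i, v j)` and `A = !![2,2;2,2]`, then `(2 − |v i|²)(2 − |v j|²) ≥ 1`. -/
theorem stmt_7 (n m : ℕ) (v : Fin m → EuclideanSpace ℝ (Fin n))
    (heut : ∀ w : EuclideanSpace ℝ (Fin n), ∑ i, ⟪w, v i⟫ ^ 2 = 2 * ⟪w, w⟫)
    (i j : Fin m) (hij : i ≠ j)
    (h1 : ∀ x : Fin 2 → ℝ,
      0 ≤ x ⬝ᵥ (((2 : ℝ) • (1 : Matrix (Fin 2) (Fin 2) ℝ)
          - !![⟪v i, v i⟫, ⟪v i, v j⟫; ⟪v j, v i⟫, ⟪v j, v j⟫]) *ᵥ x))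
    (h2 : ∀ x : Fin 2 → ℝ,
      0 ≤ x ⬝ᵥ ((!![(2:ℝ), 2; 2, 2]
          - !![⟪v i, v i⟫, ⟪v i, v j⟫; ⟪v j, v i⟫, ⟪v j, v j⟫]) *ᵥ x)) :
    1 ≤ (2 - ⟪v i, v i⟫) * (2 - ⟪v j, v j⟫) := by
  set a := ⟪v i, v i⟫ with ha
  set b := ⟪v i, v j⟫ with hb
  set c := ⟪v j, v j⟫ with hc
  have hsym : ⟪v j, v i⟫ = b := real_inner_comm _ _
  have q1 : ∀ t : ℝ, 0 ≤ (2 - a) * (t * t) + (-(2 * b)) * t + (2 - c) := by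
    intro t
    have := h1 ![t, 1]
    simp [dotProduct, Matrix.mulVec, Fin.sum_univ_two, hsym,
      Matrix.one_apply] at this
    nlinarith [this]
  have q2 : ∀ t : ℝ, 0 ≤ (2 - a) * (t * t) + (2 * (2 - b)) * t + (2 - c) := by
    intro t
    have := h2 ![t, 1]
    simp [dotProduct, Matrix.mulVec, Fin.sum_univ_two, hsym] at this
    nlinarith [this]
  have d1 : discrim (2 - a) (-(2 * b)) (2 - c) ≤ 0 := discrim_le_zero q1
  have d2 : discrim (2 - a) (2 * (2 - b)) (2 - c) ≤ 0 := discrim_le_zero q2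
  rw [discrim] at d1 d2
  nlinarith [sq_nonneg (b - 1), d1, d2]
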